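/- A choice correspondence c satisfies WARP if and only if it satisfies both Sen's α and Sen's β axioms. -/
import Mathlib


open Set

variable {X : Type*}

/-- A complete and transitive binary relation (weak order). -/
def WeakOrd (R : X → X → Prop) : Prop :=
  (∀ x y, R x y ∨ R y x) ∧ (∀ ⦃x y z⦄, R x y → R y z → R x z)

/-- A linear order: an antisymmetric weak order. -/
def LinOrdRel (L : X → X → Prop) : Prop :=
  WeakOrd L ∧ ∀ ⦃x y⦄, L x y → L y x → x = y

/-- max(A,R): the R-maximal elements of A. -/
def maxSet (R : X → X → Prop) (A : Set X) : Set X := {x ∈ A | ∀ y ∈ A, R x y}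

/-- m is the L-minimum of S: every member of S is L-above m. -/
def IsMinOf (L : X → X → Prop) (S : Set X) (m : X) : Prop := m ∈ S ∧ ∀ y ∈ S, L y m

/-- A choice correspondence: nonempty-valued and c(A) ⊆ A on every menu. -/
def ChoiceCorr (c : Set X → Set X) : Prop :=
  ∀ ⦃A : Set X⦄, A.Nonempty → (c A).Nonempty ∧ c A ⊆ A

/-- Minimal compromise representation by a weak order R and linear order L. -/
def MCRep (c : Set X → Set X) (R L : X → X → Prop) : Prop :=
  WeakOrd R ∧ LinOrdRel L ∧
  ∀ ⦃A : Set X⦄, A.Nonempty →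
    ((∃ a, maxSet R A = {a}) → c A = maxSet R A) ∧
    (¬ (∃ a, maxSet R A = {a}) →
      ∃ m, IsMinOf L (maxSet R A) m ∧ c A = maxSet R A \ {m})

/-- r^c(A): elements whose removal changes choice (with r^c(A) = A on singletons). -/
def rC (c : Set X → Set X) (A : Set X) : Set X :=
  {x ∈ A | (∃ a, A = {a}) ∨ c (A \ {x}) ≠ c A}

/-- WARP. -/
def WARP (c : Set X → Set X) : Prop :=
  ∀ ⦃A B : Set X⦄ ⦃x y : X⦄, A.Nonempty → B.Nonempty →
    x ∈ A ∩ B → y ∈ A ∩ B → x ∈ c A → y ∈ c B → x ∈ c B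

/-- Sen's α. -/
def Alpha (c : Set X → Set X) : Prop :=
  ∀ ⦃A B : Set X⦄ ⦃x : X⦄, B.Nonempty → B ⊆ A → x ∈ c A → x ∈ B → x ∈ c B

/-- Sen's β. -/
def Beta (c : Set X → Set X) : Prop :=
  ∀ ⦃A B : Set X⦄ ⦃x y : X⦄, A.Nonempty → A ⊆ B → x ∈ A → y ∈ A →
    x ∈ c A → y ∈ c A → y ∈ c B → x ∈ c B

/-- Fact 1: WARP holds iff α and β hold. -/
theorem warp_iff_alpha_beta [Finite X] (c : Set X → Set X) (hc : ChoiceCorr c) :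
    WARP c ↔ Alpha c ∧ Beta c := by
  constructor
  · intro hw
    constructor
    · intro A B x hB hBA hxA hxB
      obtain ⟨⟨y, hy⟩, hsub⟩ := hc hB
      exact hw ⟨x, hBA hxB⟩ hB ⟨hBA hxB, hxB⟩
        ⟨hBA (hsub hy), hsub hy⟩ hxA hy
    · intro A B x y hA hAB hxA hyA hxcA hycA hycB
      exact hw ⟨x, hxA⟩ ⟨x, hAB hxA⟩ ⟨hxA, hAB hxA⟩ ⟨hyA, hAB hyA⟩ hxcA hycB
  · rintro ⟨ha, hb⟩ A B x y hA hB hx hy hxcA hycB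
    have hS : (A ∩ B).Nonempty := ⟨x, hx⟩
    have hxS : x ∈ c (A ∩ B) := ha hS inter_subset_left hxcA hx
    have hyS : y ∈ c (A ∩ B) := ha hS inter_subset_right hycB hy
    exact hb hS inter_subset_right hx hy hxS hyS hycB
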